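/- Write k = 2^{p_1} + … + 2^{p_t} with 0 ≤ p_1 < p_2 < … < p_t, and define U^<(k) = Σ_i A(2^{p_1}+…+2^{p_{i-1}}) U(2^{p_i}) A(2^{p_{i+1}}+…+2^{p_t}) and V^<(k) = V(2^{p_1})⋯V(2^{p_t}), and symmetrically U^>(k), V^>(k) with reversed order. Then for all k, A(k) = U^<(k) ⊕ V^<(k) = U^>(k) ⊕ V^>(k). -/

import Mathlib

/-- The degree-`k` homogeneous component `A(k)` of the free `K`-algebra `A` on two
degree-one generators `x, y`. -/
noncomputable def Adeg (K : Type*) [Field K] (k : ℕ) : Submodule K (FreeAlgebra K (Fin 2)) :=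
  (Submodule.span K (Set.range (FreeAlgebra.ι K))) ^ k

/-- `x` is a monomial of `A`, i.e. a product of generators. -/
def IsMonomial (K : Type*) [Field K] (x : FreeAlgebra K (Fin 2)) : Prop :=
  ∃ l : List (Fin 2), x = (l.map (FreeAlgebra.ι K)).prod

/-- The exponents `p₁ < p₂ < … < p_t` of the binary expansion
`k = 2^{p₁} + … + 2^{p_t}`, in increasing order. -/
def bitsOf (k : ℕ) : List ℕ := (List.range k).filter (fun p => k.testBit p)

/-- `V^<(k) = V(2^{p₁}) ⋯ V(2^{p_t})` (increasing order); here `V m` plays the role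
of `V(2^m)`.  For `k = 0` this is the unit submodule (dimension one). -/
noncomputable def Vlt (K : Type*) [Field K] (V : ℕ → Submodule K (FreeAlgebra K (Fin 2)))
    (k : ℕ) : Submodule K (FreeAlgebra K (Fin 2)) :=
  ((bitsOf k).map V).prod

/-- `V^>(k) = V(2^{p_t}) ⋯ V(2^{p₁})` (decreasing order). -/
noncomputable def Vgt (K : Type*) [Field K] (V : ℕ → Submodule K (FreeAlgebra K (Fin 2)))
    (k : ℕ) : Submodule K (FreeAlgebra K (Fin 2)) :=
  (((bitsOf k).reverse).map V).prod

/-- `U^<(k) = Σ_i A(2^{p₁}+…+2^{p_{i-1}}) U(2^{p_i}) A(2^{p_{i+1}}+…+2^{p_t})`. -/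
noncomputable def Ult (K : Type*) [Field K] (U : ℕ → Submodule K (FreeAlgebra K (Fin 2)))
    (k : ℕ) : Submodule K (FreeAlgebra K (Fin 2)) :=
  ⨆ i : Fin (bitsOf k).length,
    Adeg K (((bitsOf k).take i.val).map (fun p => 2 ^ p)).sum * U ((bitsOf k).get i) *
      Adeg K (((bitsOf k).drop (i.val + 1)).map (fun p => 2 ^ p)).sum

/-- `U^>(k) = Σ_i A(2^{p_t}+…+2^{p_{i+1}}) U(2^{p_i}) A(2^{p_{i-1}}+…+2^{p₁})`,
i.e. the analogue of `U^<` for the reversed (decreasing) order of the powers. -/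
noncomputable def Ugt (K : Type*) [Field K] (U : ℕ → Submodule K (FreeAlgebra K (Fin 2)))
    (k : ℕ) : Submodule K (FreeAlgebra K (Fin 2)) :=
  ⨆ i : Fin (bitsOf k).reverse.length,
    Adeg K ((((bitsOf k).reverse.take i.val).map (fun p => 2 ^ p)).sum) *
      U ((bitsOf k).reverse.get i) *
      Adeg K ((((bitsOf k).reverse.drop (i.val + 1)).map (fun p => 2 ^ p)).sum)

/-!
Multiplication identifies `A(a) ⊗ A(b)` with `A(a + b)`, since both have dimension `2^(a+b)`
(the words of length `a + b` form a basis). Hence if `A(a) = P ⊕ Q` and `A(b) = R ⊕ S`, then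
`A(a + b) = (P·A(b) + Q·R) ⊕ Q·S`: the two summands span, and their dimensions add up to at most
`dim P · dim A(b) + dim Q · (dim R + dim S) = dim A(a + b)`. Splitting off the first power
`2^{p₁}` of `k`, `U^<(k) = U(2^{p₁}) A(k - 2^{p₁}) + A(2^{p₁}) U^<(k - 2^{p₁})` and
`V^<(k) = V(2^{p₁}) V^<(k - 2^{p₁})`, so induction on the list of exponents, in either order,
gives both decompositions.
-/
open Module Submodule

namespace Submodule

variable {K A : Type*} [Field K] [Ring A] [Algebra K A]

theorem finrank_mul_le (M N : Submodule K A) [FiniteDimensional K M] [FiniteDimensional K N] :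
    finrank K ↥(M * N) ≤ finrank K M * finrank K N := by
  rw [← mulMap_range, ← finrank_tensorProduct]
  exact LinearMap.finrank_range_le _

instance finiteDimensional_mul (M N : Submodule K A) [FiniteDimensional K M]
    [FiniteDimensional K N] : FiniteDimensional K ↥(M * N) := by
  rw [← mulMap_range]
  infer_instance

theorem finrank_sup_of_inf_eq_bot {M N : Submodule K A} [FiniteDimensional K M]
    [FiniteDimensional K N] (h : M ⊓ N = ⊥) : finrank K ↥(M ⊔ N) = finrank K M + finrank K N := by
  rw [← finrank_sup_add_finrank_inf_eq, h, finrank_bot, add_zero]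

theorem inf_eq_bot_of_finrank_add_le {M N : Submodule K A} [FiniteDimensional K M]
    [FiniteDimensional K N] (h : finrank K M + finrank K N ≤ finrank K ↥(M ⊔ N)) : M ⊓ N = ⊥ := by
  have := finrank_sup_add_finrank_inf_eq M N
  exact finrank_eq_zero.mp (by omega)

theorem decomposition_mul_decomposition {B C P Q R S : Submodule K A} [FiniteDimensional K B]
    [FiniteDimensional K C] (hBC : finrank K B * finrank K C ≤ finrank K ↥(B * C))
    (hPQ : P ⊔ Q = B) (hPQ' : P ⊓ Q = ⊥) (hRS : R ⊔ S = C) (hRS' : R ⊓ S = ⊥) :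
    (P * C ⊔ B * R) ⊔ Q * S = B * C ∧ (P * C ⊔ B * R) ⊓ Q * S = ⊥ := by
  have hB : P * C ⊔ B * R = P * C ⊔ Q * R := by
    rw [← hPQ, sup_mul, ← sup_assoc, sup_eq_left.mpr (mul_le_mul' le_rfl (hRS ▸ le_sup_left))]
  have hsum : (P * C ⊔ B * R) ⊔ Q * S = B * C := by
    rw [hB, sup_assoc, ← mul_sup, hRS, ← sup_mul, hPQ]
  have : FiniteDimensional K P := finiteDimensional_of_le (hPQ ▸ le_sup_left)
  have : FiniteDimensional K Q := finiteDimensional_of_le (hPQ ▸ le_sup_right)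
  have : FiniteDimensional K R := finiteDimensional_of_le (hRS ▸ le_sup_left)
  have : FiniteDimensional K S := finiteDimensional_of_le (hRS ▸ le_sup_right)
  refine ⟨hsum, inf_eq_bot_of_finrank_add_le ?_⟩
  have hb := finrank_sup_of_inf_eq_bot hPQ'
  have hc := finrank_sup_of_inf_eq_bot hRS'
  rw [hPQ] at hb
  rw [hRS] at hc
  rw [hsum, hB]
  calc finrank K ↥(P * C ⊔ Q * R) + finrank K ↥(Q * S)
      ≤ finrank K ↥(P * C) + finrank K ↥(Q * R) + finrank K ↥(Q * S) := by
        gcongr; exact finrank_add_le_finrank_add_finrank _ _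
    _ ≤ finrank K P * finrank K C + finrank K Q * finrank K R + finrank K Q * finrank K S := by
        gcongr <;> exact finrank_mul_le _ _
    _ = finrank K B * finrank K C := by rw [hb, hc]; ring
    _ ≤ finrank K ↥(B * C) := hBC

end Submodule

namespace FreeAlgebra

variable (K X : Type*) [Field K]

theorem basisFreeMonoid_apply (w : FreeMonoid X) :
    basisFreeMonoid K X w = (w.toList.map (ι K)).prod := by
  simp [basisFreeMonoid, equivMonoidAlgebraFreeMonoid, FreeMonoid.lift_apply]

theorem span_range_ι_pow (n : ℕ) :
    span K (Set.range (ι K (X := X))) ^ n =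
      span K (Set.range fun f : Fin n → X => (List.ofFn fun i => ι K (f i)).prod) := by
  rw [span_pow]
  congr 1
  ext a
  simp only [Set.mem_pow, Set.mem_range]
  constructor
  · rintro ⟨f, rfl⟩
    exact ⟨fun i => (f i).2.choose, by simp only [(f _).2.choose_spec]⟩
  · rintro ⟨f, rfl⟩
    exact ⟨fun i => ⟨ι K (f i), f i, rfl⟩, rfl⟩

theorem finrank_span_range_ι_pow [Fintype X] (n : ℕ) :
    finrank K ↥(span K (Set.range (ι K (X := X))) ^ n) = Fintype.card X ^ n := by
  rw [span_range_ι_pow, finrank_span_eq_card, Fintype.card_fun, Fintype.card_fin]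
  have : (fun f : Fin n → X => (List.ofFn fun i => ι K (f i)).prod) =
      basisFreeMonoid K X ∘ FreeMonoid.ofList ∘ List.ofFn := by
    ext f
    simp [basisFreeMonoid_apply, List.map_ofFn, Function.comp_def]
  rw [this]
  exact (basisFreeMonoid K X).linearIndependent.comp _
    (FreeMonoid.ofList.injective.comp List.ofFn_injective)

end FreeAlgebra

theorem iSup_fin_succ {α : Type*} [CompleteLattice α] {n : ℕ} (f : Fin (n + 1) → α) :
    ⨆ i, f i = f 0 ⊔ ⨆ i : Fin n, f i.succ :=
  le_antisymm (iSup_le fun i => Fin.cases le_sup_left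
      (fun j => le_sup_of_le_right (le_iSup (fun j => f j.succ) j)) i)
    (sup_le (le_iSup f 0) (iSup_le fun j => le_iSup f j.succ))

section FreeAlgebraFin2

variable {K : Type*} [Field K]

theorem Adeg_add (a b : ℕ) : Adeg K (a + b) = Adeg K a * Adeg K b :=
  pow_add _ a b

theorem Adeg_zero : Adeg K 0 = 1 :=
  pow_zero _

instance (n : ℕ) : FiniteDimensional K (Adeg K n) := by
  rw [Adeg, FreeAlgebra.span_range_ι_pow]
  exact FiniteDimensional.span_of_finite K (Set.finite_range _)

theorem finrank_Adeg (n : ℕ) : finrank K (Adeg K n) = 2 ^ n := by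
  rw [Adeg, FreeAlgebra.finrank_span_range_ι_pow, Fintype.card_fin]

theorem finrank_Adeg_mul_Adeg (a b : ℕ) :
    finrank K ↥(Adeg K a * Adeg K b) = finrank K (Adeg K a) * finrank K (Adeg K b) := by
  rw [← Adeg_add, finrank_Adeg, finrank_Adeg, finrank_Adeg, pow_add]

/-- `U^<` for an arbitrary list of exponents: `Ult K U k` and `Ugt K U k` are, by definition,
`ulist U (bitsOf k)` and `ulist U (bitsOf k).reverse`. -/
noncomputable def ulist (U : ℕ → Submodule K (FreeAlgebra K (Fin 2))) (L : List ℕ) :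
    Submodule K (FreeAlgebra K (Fin 2)) :=
  ⨆ i : Fin L.length,
    Adeg K ((L.take i.val).map (fun p => 2 ^ p)).sum * U (L.get i) *
      Adeg K ((L.drop (i.val + 1)).map (fun p => 2 ^ p)).sum

theorem ulist_nil (U : ℕ → Submodule K (FreeAlgebra K (Fin 2))) : ulist U [] = ⊥ := by
  simp [ulist]

theorem ulist_cons (U : ℕ → Submodule K (FreeAlgebra K (Fin 2))) (p : ℕ) (L : List ℕ) :
    ulist U (p :: L) =
      U p * Adeg K (L.map (fun p => 2 ^ p)).sum ⊔ Adeg K (2 ^ p) * ulist U L := by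
  rw [ulist, ulist, mul_iSup]
  refine (iSup_fin_succ (n := L.length) _).trans ?_
  congr 1
  · simp [Adeg_zero]
  · refine iSup_congr fun j => ?_
    simp [Adeg_add, mul_assoc]

theorem ulist_sup_prod_eq_and_inf_eq_bot (U V : ℕ → Submodule K (FreeAlgebra K (Fin 2)))
    (hsum : ∀ m, V m ⊔ U m = Adeg K (2 ^ m)) (hint : ∀ m, V m ⊓ U m = ⊥) (L : List ℕ) :
    ulist U L ⊔ (L.map V).prod = Adeg K (L.map (fun p => 2 ^ p)).sum ∧
      ulist U L ⊓ (L.map V).prod = ⊥ := by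
  induction L with
  | nil => simp [ulist_nil, Adeg_zero]
  | cons p L ih =>
    rw [ulist_cons, List.map_cons, List.prod_cons, List.map_cons, List.sum_cons, Adeg_add]
    exact decomposition_mul_decomposition (finrank_Adeg_mul_Adeg _ _).ge
      (sup_comm (V p) _ ▸ hsum p) (inf_comm (V p) _ ▸ hint p) ih.1 ih.2

end FreeAlgebraFin2

theorem bitsOf_perm_bitIndices (k : ℕ) : (bitsOf k).Perm k.bitIndices := by
  refine (List.perm_ext_iff_of_nodup (List.nodup_range.filter _)
    Nat.bitIndices_sorted.nodup).mpr fun p => ?_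
  simp only [List.mem_filter, List.mem_range, Nat.mem_bitIndices, and_iff_right_iff_imp]
  exact fun h => Nat.lt_two_pow_self.trans_le (Nat.ge_two_pow_of_testBit h)

theorem sum_map_two_pow_bitsOf (k : ℕ) : ((bitsOf k).map (fun p => 2 ^ p)).sum = k := by
  rw [((bitsOf_perm_bitIndices k).map _).sum_eq, Nat.sum_map_two_pow_bitIndices]

theorem stmt5_general {K : Type*} [Field K]
    (U V : ℕ → Submodule K (FreeAlgebra K (Fin 2)))
    (hsum : ∀ m, V m ⊔ U m = Adeg K (2 ^ m)) (hint : ∀ m, V m ⊓ U m = ⊥) :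
    ∀ k : ℕ,
      (Ult K U k ⊔ Vlt K V k = Adeg K k ∧ Ult K U k ⊓ Vlt K V k = ⊥) ∧
      (Ugt K U k ⊔ Vgt K V k = Adeg K k ∧ Ugt K U k ⊓ Vgt K V k = ⊥) := by
  intro k
  have hk := sum_map_two_pow_bitsOf k
  have hk' : ((bitsOf k).reverse.map (fun p => 2 ^ p)).sum = k := by
    rw [List.map_reverse, List.sum_reverse, hk]
  have hlt := ulist_sup_prod_eq_and_inf_eq_bot U V hsum hint (bitsOf k)
  have hgt := ulist_sup_prod_eq_and_inf_eq_bot U V hsum hint (bitsOf k).reverse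
  rw [hk] at hlt
  rw [hk'] at hgt
  exact ⟨hlt, hgt⟩

/-- Lemma 1.2: for every `k`, `A(k) = U^<(k) ⊕ V^<(k) = U^>(k) ⊕ V^>(k)`. -/
theorem stmt5 {K : Type*} [Field K]
    (U V : ℕ → Submodule K (FreeAlgebra K (Fin 2)))
    (hUA : ∀ m, U m ≤ Adeg K (2 ^ m)) (hVA : ∀ m, V m ≤ Adeg K (2 ^ m))
    (hV0 : V 0 = Adeg K 1) (hU0 : U 0 = ⊥)
    (hVmon : ∀ m, ∃ S : Set (FreeAlgebra K (Fin 2)),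
      (∀ x ∈ S, IsMonomial K x) ∧ V m = Submodule.span K S)
    (hsum : ∀ m, V m ⊔ U m = Adeg K (2 ^ m)) (hint : ∀ m, V m ⊓ U m = ⊥)
    (habs : ∀ m, Adeg K (2 ^ m) * U m + U m * Adeg K (2 ^ m) ≤ U (m + 1))
    (hVV : ∀ m, V (m + 1) ≤ V m * V m) :
    ∀ k : ℕ,
      (Ult K U k ⊔ Vlt K V k = Adeg K k ∧ Ult K U k ⊓ Vlt K V k = ⊥) ∧
      (Ugt K U k ⊔ Vgt K V k = Adeg K k ∧ Ugt K U k ⊓ Vgt K V k = ⊥) :=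
  stmt5_general U V hsum hint
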